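/- If d ≥ 3, then the expected arrival time of the terminal complete record is finite; more precisely, E(T) = ∑_{k=1}^{∞} k^{-(d-1)} · ∏_{m = k+1}^{∞} (1 − m^{-d}) ≤ ∑_{k=1}^{∞} k^{-(d-1)} < ∞. -/

import Mathlib

/-!
Write `Y k = X (k + 1)`. The coordinate sequences `k ↦ Y k j` are independent i.i.d. sequences
with atomless laws, and `Y k` is a complete record iff `Y k j` is a record of the `j`-th
sequence for every `j`. For one such sequence the events "`k` is a record", `k ∈ S`, have joint
probability `∏_{k ∈ S} (k + 1)⁻¹`: condition on the last observation and use
`∫ F(a)ⁿ dF(a) = 1 / (n + 1)`, which holds because almost surely exactly one of `n + 1`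
observations is the strict maximum. Hence the complete-record events are independent with
probabilities `(k + 1)^{-d}`, so `P(T = k + 1) = (k + 1)^{-d} ∏_{m > k} (1 - (m + 1)^{-d})`, and
`E T = ∑ (k + 1) P(T = k + 1)` is dominated by `∑ (k + 1)^{-(d-1)} < ∞` when `d ≥ 3`.
-/

open MeasureTheory ProbabilityTheory Filter Topology

noncomputable section

/-- `X m` is a complete record: each of its components strictly exceeds the corresponding
component of all previous observations `X i`, `1 ≤ i < m`.  In particular `X 1` is a
complete record by convention (vacuously). -/
def IsCompleteRecord {Ω : Type*} {d : ℕ} (X : ℕ → Ω → Fin d → ℝ) (m : ℕ) (ω : Ω) : Prop :=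
  ∀ i, 1 ≤ i → i < m → ∀ j, X i ω j < X m ω j

/-- `T = sup {m ∈ ℕ : X m is a complete record}`, the index of the terminal complete
record (for `d ≥ 2` the set of complete-record indices is a.s. finite, so this is the
index of the last complete record; `sSup` of an infinite set of naturals is junk `0`). -/
def terminalRecordIndex {Ω : Type*} {d : ℕ} (X : ℕ → Ω → Fin d → ℝ) (ω : Ω) : ℕ :=
  sSup {m : ℕ | 1 ≤ m ∧ IsCompleteRecord X m ω}

open Set
open scoped ENNReal

namespace MeasureTheory.Measure

variable {α : Type*} [MeasurableSpace α] (μ : Measure α)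

theorem pi_apply_eq_lintegral_insertNth [SigmaFinite μ] {n : ℕ} (k : Fin (n + 1))
    {s : Set (Fin (n + 1) → α)} (hs : MeasurableSet s) :
    Measure.pi (fun _ => μ) s =
      ∫⁻ a, Measure.pi (fun _ => μ) {z | Fin.insertNth k a z ∈ s} ∂μ := by
  let e := MeasurableEquiv.piFinSuccAbove (fun _ : Fin (n + 1) => α) k
  have he := (measurePreserving_piFinSuccAbove (fun _ : Fin (n + 1) => μ) k).symm e
  rw [← he.measure_preimage_equiv, Measure.prod_apply (e.symm.measurable hs)]
  rfl

theorem pi_setOf_apply_eq_apply_eq_zero [MeasurableEq α] [SigmaFinite μ] [NullSingletonClass μ]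
    {n : ℕ} {i k : Fin (n + 1)} (hik : i ≠ k) :
    Measure.pi (fun _ => μ) {y | y i = y k} = 0 := by
  obtain ⟨j, rfl⟩ := Fin.exists_succAbove_eq hik
  rw [pi_apply_eq_lintegral_insertNth μ k (measurableSet_eq_fun (by fun_prop) (by fun_prop))]
  simp [Fin.insertNth_apply_same, Fin.insertNth_apply_succAbove, pi_hyperplane]

theorem ae_injective_pi [MeasurableEq α] [SigmaFinite μ] [NullSingletonClass μ] {n : ℕ} :
    ∀ᵐ y ∂Measure.pi (fun _ : Fin (n + 1) => μ), Function.Injective y := by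
  have : ∀ᵐ y ∂Measure.pi (fun _ : Fin (n + 1) => μ), ∀ i k, i ≠ k → y i ≠ y k := by
    simp only [ae_all_iff]
    intro i k hik
    exact measure_mono_null (fun y hy => by simpa using hy)
      (pi_setOf_apply_eq_apply_eq_zero μ hik)
  filter_upwards [this] with y hy i k
  exact not_imp_not.1 (hy i k)

theorem map_swap_pi_pi {ι κ : Type*} [Fintype ι] [Fintype κ] (ν : κ → Measure α)
    [∀ j, SigmaFinite (ν j)] :
    (Measure.pi fun _ : ι => Measure.pi ν).map Function.swap =
      Measure.pi fun j => Measure.pi fun _ : ι => ν j := by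
  refine (Measure.pi_eq_generateFrom (fun _ => generateFrom_pi) (fun _ => isPiSystem_pi)
    (fun j => .pi fun _ => (ν j).toFiniteSpanningSetsIn) ?_).symm
  rintro s hs
  choose t ht hts using hs
  have hswap : Function.swap ⁻¹' univ.pi s = univ.pi fun i => univ.pi fun j => t j i := by
    ext f; simpa [← hts, Function.swap] using forall_comm
  rw [Measure.map_apply (by fun_prop) (.univ_pi fun j => hts j ▸ .univ_pi fun i => ht j i trivial),
    hswap]
  simp only [pi_pi, ← hts]
  exact Finset.prod_comm

end MeasureTheory.Measure

namespace ProbabilityTheory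

variable {Ω : Type*} [MeasurableSpace Ω] {P : Measure Ω}

theorem iIndepSet.hasProd_measureReal_iInter_compl {ι : Type*} [Countable ι] {s : ι → Set Ω}
    (h : iIndepSet s P) (hs : ∀ i, MeasurableSet (s i)) :
    HasProd (fun i => 1 - P.real (s i)) (P.real (⋂ i, (s i)ᶜ)) := by
  have := h.isProbabilityMeasure
  have hfin (F : Finset ι) : ∏ i ∈ F, (1 - P.real (s i)) = P.real (⋂ i ∈ F, (s i)ᶜ) := by
    rw [measureReal_def, ((iIndepSet_iff_iIndep _ _).1 h).meas_biInter
      fun i _ => (MeasurableSpace.measurableSet_generateFrom (mem_singleton _)).compl,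
      ENNReal.toReal_prod]
    exact Finset.prod_congr rfl fun i _ => (probReal_compl_eq_one_sub (hs i)).symm
  have hlim :
      Tendsto (fun F : Finset ι => P (⋂ i ∈ F, (s i)ᶜ)) atTop (𝓝 (P (⋂ i, (s i)ᶜ))) := by
    rw [iInter_eq_iInter_finset]
    exact tendsto_measure_iInter_atTop
      (fun F => (F.measurableSet_biInter fun i _ => (hs i).compl).nullMeasurableSet)
      (fun F G hFG => biInter_subset_biInter_left hFG) ⟨∅, measure_ne_top _ _⟩
  show Tendsto (fun F : Finset ι => ∏ i ∈ F, (1 - P.real (s i))) atTop _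
  simp only [hfin]
  exact (ENNReal.tendsto_toReal (measure_ne_top _ _)).comp hlim

theorem iIndepSet.measure_inter_iInter_compl_add {s : ℕ → Set Ω} (h : iIndepSet s P)
    (hs : ∀ i, MeasurableSet (s i)) (k : ℕ) :
    P (s k ∩ ⋂ m, (s (m + k + 1))ᶜ) = P (s k) * P (⋂ m, (s (m + k + 1))ᶜ) := by
  refine (Indep_iff _ _ P).1
    (h.indep_generateFrom_of_disjoint hs {k} {m | k < m} (by simp)) _ _
    (MeasurableSpace.measurableSet_generateFrom (by exact ⟨k, rfl, rfl⟩)) ?_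
  exact .iInter fun m =>
    (MeasurableSpace.measurableSet_generateFrom (by exact ⟨m + k + 1, by simp, rfl⟩)).compl

end ProbabilityTheory

section RecordSet

variable {α : Type*} [LinearOrder α]

def recordSet (S : Finset ℕ) (n : ℕ) : Set (Fin n → α) :=
  {y | ∀ k : Fin n, (k : ℕ) ∈ S → ∀ i < k, y i < y k}

theorem snoc_mem_recordSet_iff {S : Finset ℕ} {n : ℕ} (z : Fin n → α) (a : α) :
    Fin.snoc z a ∈ recordSet S (n + 1) ↔ z ∈ recordSet S n ∧ (n ∈ S → ∀ i, z i < a) := by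
  have h (i : Fin n) : ¬ Fin.last n < i.castSucc := (Fin.castSucc_lt_last i).not_gt
  simp [recordSet, Fin.forall_fin_succ', h]

end RecordSet

section OrderedMeasurable

variable {α : Type*} [LinearOrder α] [TopologicalSpace α] [OrderClosedTopology α]
  [SecondCountableTopology α] [MeasurableSpace α] [OpensMeasurableSpace α]

open Measure

theorem lintegral_measure_Iio_pow (ν : Measure α) [IsFiniteMeasure ν] [NullSingletonClass ν]
    (n : ℕ) : ∫⁻ a, ν (Iio a) ^ n ∂ν = ν univ ^ (n + 1) / (n + 1 : ℕ) := by
  let π := Measure.pi fun _ : Fin (n + 1) => ν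
  let M : Fin (n + 1) → Set (Fin (n + 1) → α) := fun k =>
    {y | ∀ j, y (k.succAbove j) < y k}
  have hM_meas (k) : MeasurableSet (M k) := by
    simp only [M, ofPred_forall]
    exact .iInter fun j => measurableSet_lt (by fun_prop) (by fun_prop)
  have hM (k) : π (M k) = ∫⁻ a, ν (Iio a) ^ n ∂ν := by
    rw [pi_apply_eq_lintegral_insertNth ν k (hM_meas k)]
    congr! with a
    have : {z | Fin.insertNth k a z ∈ M k} = univ.pi fun _ => Iio a := by
      ext z; simp [M, Fin.insertNth_apply_same, Fin.insertNth_apply_succAbove]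
    simp [this, pi_pi]
  have hcover : ∀ᵐ y ∂π, y ∈ ⋃ k, M k := by
    filter_upwards [ae_injective_pi ν] with y hy
    obtain ⟨k, hk⟩ := Finite.exists_max y
    exact mem_iUnion.2 ⟨k, fun j => (hk _).lt_of_ne (hy.ne (Fin.succAbove_ne k j))⟩
  have hdisj : Pairwise (Function.onFun Disjoint M) := by
    intro k k' hkk'
    obtain ⟨j, rfl⟩ := Fin.exists_succAbove_eq hkk'.symm
    obtain ⟨j', hj'⟩ := Fin.exists_succAbove_eq hkk'
    refine disjoint_left.2 fun y hy hy' => lt_asymm (hy j) ?_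
    simpa [hj'] using hy' j'
  have hsum : ((n + 1 : ℕ) : ℝ≥0∞) * ∫⁻ a, ν (Iio a) ^ n ∂ν = ν univ ^ (n + 1) := by
    calc ((n + 1 : ℕ) : ℝ≥0∞) * ∫⁻ a, ν (Iio a) ^ n ∂ν = π (⋃ k, M k) := by
          rw [measure_iUnion hdisj hM_meas]; simp [hM]
      _ = π univ := measure_congr (ae_eq_univ.2 (ae_iff.1 hcover))
      _ = ν univ ^ (n + 1) := by simp [π, Measure.pi_univ]
  rw [ENNReal.eq_div_iff (by positivity) (by simp), hsum]

theorem measurableSet_recordSet (S : Finset ℕ) (n : ℕ) :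
    MeasurableSet (recordSet (α := α) S n) := by
  simp only [recordSet, ofPred_forall]
  exact .iInter fun k => .iInter fun _ => .iInter fun i => .iInter fun _ =>
    measurableSet_lt (by fun_prop) (by fun_prop)

theorem pi_recordSet (S : Finset ℕ) (n : ℕ) (ν : Measure α) [IsFiniteMeasure ν]
    [NullSingletonClass ν] :
    Measure.pi (fun _ : Fin n => ν) (recordSet S n) =
      ν univ ^ n * ∏ k ∈ Finset.range n, if k ∈ S then ((k + 1 : ℕ) : ℝ≥0∞)⁻¹ else 1 := by
  induction n generalizing ν with
  | zero => simp [recordSet]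
  | succ n ih =>
    rw [Measure.pi_apply_eq_lintegral_insertNth ν (Fin.last n) (measurableSet_recordSet S _),
      Finset.prod_range_succ]
    simp only [Fin.insertNth_last', snoc_mem_recordSet_iff]
    set c := ∏ k ∈ Finset.range n, if k ∈ S then ((k + 1 : ℕ) : ℝ≥0∞)⁻¹ else 1
    by_cases hn : n ∈ S
    · have hc : c ≠ ∞ := ENNReal.prod_ne_top fun k _ => by split_ifs <;> simp
      have (a : α) : {z : Fin n → α | z ∈ recordSet S n ∧ (n ∈ S → ∀ i, z i < a)} =
          recordSet S n ∩ univ.pi fun _ => Iio a := by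
        ext z; simp [hn]
      simp_rw [this, ← Measure.restrict_apply (measurableSet_recordSet S n), restrict_pi_pi, ih,
        Measure.restrict_apply_univ]
      rw [lintegral_mul_const' _ _ hc, lintegral_measure_Iio_pow, if_pos hn,
        ENNReal.div_eq_inv_mul]
      ring
    · simp only [hn, IsEmpty.forall_iff, and_true, ofPred_mem_eq, ih, lintegral_const, ↓reduceIte,
        mul_one]
      ring

end OrderedMeasurable

section Records

variable {Ω ι α : Type*} [MeasurableSpace Ω] [Fintype ι] [LinearOrder α] [TopologicalSpace α]
  [OrderClosedTopology α] [SecondCountableTopology α] [MeasurableSpace α]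
  [OpensMeasurableSpace α]

def recordEvent (Y : ℕ → Ω → ι → α) (k : ℕ) : Set Ω :=
  {ω | ∀ i < k, ∀ j, Y i ω j < Y k ω j}

theorem measurableSet_recordEvent {Y : ℕ → Ω → ι → α} (hY : ∀ m, Measurable (Y m)) (k : ℕ) :
    MeasurableSet (recordEvent Y k) := by
  simp only [recordEvent, ofPred_forall]
  exact .iInter fun i => .iInter fun _ => .iInter fun j =>
    measurableSet_lt (by fun_prop) (by fun_prop)

variable {P : Measure Ω} [IsProbabilityMeasure P] {ν : ι → Measure α}
  [∀ j, IsProbabilityMeasure (ν j)] [∀ j, NullSingletonClass (ν j)] {Y : ℕ → Ω → ι → α}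

theorem measure_biInter_recordEvent (hY : ∀ m, Measurable (Y m)) (hindep : iIndepFun Y P)
    (hlaw : ∀ m, P.map (Y m) = Measure.pi ν) (S : Finset ℕ) :
    P (⋂ k ∈ S, recordEvent Y k) = ∏ k ∈ S, (((k + 1 : ℕ) : ℝ≥0∞) ^ Fintype.card ι)⁻¹ := by
  obtain ⟨n, hSn⟩ := Finset.exists_nat_subset_range S
  let W : Ω → ι → Fin n → α := fun ω j i => Y i ω j
  have hW : P.map W = Measure.pi fun j => Measure.pi fun _ : Fin n => ν j := by
    have hV : P.map (fun ω (i : Fin n) => Y i ω) = Measure.pi fun _ => Measure.pi ν := by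
      rw [(iIndepFun_iff_map_fun_eq_pi_map (f := fun i : Fin n => Y i)
        fun i => (hY i).aemeasurable).1 (hindep.precomp Fin.val_injective)]
      simp [hlaw]
    rw [← Measure.map_swap_pi_pi, ← hV, Measure.map_map (by fun_prop) (by fun_prop)]
    rfl
  have hpre : ⋂ k ∈ S, recordEvent Y k = W ⁻¹' univ.pi fun _ => recordSet S n := by
    ext ω
    simp only [mem_iInter, mem_preimage, mem_univ_pi, recordEvent, recordSet, mem_ofPred_eq]
    constructor
    · exact fun h j k hk i hik => h k hk i hik j
    · intro h k hk i hik j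
      have hkn := Finset.mem_range.1 (hSn hk)
      exact h j ⟨k, hkn⟩ hk ⟨i, hik.trans hkn⟩ hik
  rw [hpre, ← Measure.map_apply (by fun_prop) (.univ_pi fun _ => measurableSet_recordSet S n),
    hW, Measure.pi_pi]
  simp_rw [pi_recordSet, Finset.prod_ite_mem, Finset.inter_eq_right.2 hSn]
  simp [Finset.prod_pow, ENNReal.inv_pow]

theorem measure_recordEvent (hY : ∀ m, Measurable (Y m)) (hindep : iIndepFun Y P)
    (hlaw : ∀ m, P.map (Y m) = Measure.pi ν) (k : ℕ) :
    P (recordEvent Y k) = (((k + 1 : ℕ) : ℝ≥0∞) ^ Fintype.card ι)⁻¹ := by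
  simpa using measure_biInter_recordEvent hY hindep hlaw {k}

theorem iIndepSet_recordEvent (hY : ∀ m, Measurable (Y m)) (hindep : iIndepFun Y P)
    (hlaw : ∀ m, P.map (Y m) = Measure.pi ν) : iIndepSet (recordEvent Y) P := by
  refine (iIndepSet_iff_meas_biInter (measurableSet_recordEvent hY)).2 fun S => ?_
  simp_rw [measure_biInter_recordEvent hY hindep hlaw, measure_recordEvent hY hindep hlaw]

def lastRecordEvent (Y : ℕ → Ω → ι → α) (k : ℕ) : Set Ω :=
  recordEvent Y k ∩ ⋂ m, (recordEvent Y (m + k + 1))ᶜ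

theorem measurableSet_lastRecordEvent {Y : ℕ → Ω → ι → α} (hY : ∀ m, Measurable (Y m))
    (k : ℕ) : MeasurableSet (lastRecordEvent Y k) :=
  (measurableSet_recordEvent hY k).inter
    (.iInter fun _ => (measurableSet_recordEvent hY _).compl)

theorem measureReal_lastRecordEvent (hY : ∀ m, Measurable (Y m)) (hindep : iIndepFun Y P)
    (hlaw : ∀ m, P.map (Y m) = Measure.pi ν) (k : ℕ) :
    P.real (lastRecordEvent Y k) =
      1 / ((k + 1 : ℕ) : ℝ) ^ Fintype.card ι * P.real (⋂ m, (recordEvent Y (m + k + 1))ᶜ) := by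
  rw [lastRecordEvent, measureReal_def,
    (iIndepSet_recordEvent hY hindep hlaw).measure_inter_iInter_compl_add
      (measurableSet_recordEvent hY), ENNReal.toReal_mul, measure_recordEvent hY hindep hlaw,
    ENNReal.toReal_inv, ENNReal.toReal_pow, ENNReal.toReal_natCast, one_div, measureReal_def]

theorem hasProd_measureReal_iInter_compl_recordEvent (hY : ∀ m, Measurable (Y m))
    (hindep : iIndepFun Y P) (hlaw : ∀ m, P.map (Y m) = Measure.pi ν) (k : ℕ) :
    HasProd (fun m => 1 - 1 / ((m + k + 2 : ℕ) : ℝ) ^ Fintype.card ι)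
      (P.real (⋂ m, (recordEvent Y (m + k + 1))ᶜ)) := by
  have h := (iIndepSet_iff_iIndep _ _).1 (iIndepSet_recordEvent hY hindep hlaw)
  have hshift : iIndepSet (fun m => recordEvent Y (m + k + 1)) P :=
    (iIndepSet_iff_iIndep _ _).2 (h.precomp fun _ _ h => by simpa using h)
  convert hshift.hasProd_measureReal_iInter_compl fun m => measurableSet_recordEvent hY _
    using 3 with m
  rw [measureReal_def, measure_recordEvent hY hindep hlaw, ENNReal.toReal_inv,
    ENNReal.toReal_pow, ENNReal.toReal_natCast, one_div]

end Records

theorem nullSingletonClass_map_of_continuous {Ω : Type*} [MeasurableSpace Ω] {P : Measure Ω}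
    [IsProbabilityMeasure P] {f : Ω → ℝ} (hf : Measurable f)
    (hcont : Continuous fun t => (P {ω | f ω ≤ t}).toReal) : NullSingletonClass (P.map f) := by
  have := Measure.isProbabilityMeasure_map (μ := P) hf.aemeasurable
  have hcdf : ⇑(cdf (P.map f)) = fun t => (P {ω | f ω ≤ t}).toReal := by
    ext t
    rw [cdf_eq_real, measureReal_def, Measure.map_apply hf measurableSet_Iic]
    rfl
  refine ⟨fun a => ?_⟩
  rw [← measure_cdf (P.map f), StieltjesFunction.measure_singleton, hcdf,
    hcont.continuousWithinAt.leftLim_eq, sub_self, ENNReal.ofReal_zero]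

section TerminalRecord

variable {Ω : Type*} {d : ℕ} {X : ℕ → Ω → Fin d → ℝ}

theorem isCompleteRecord_succ_iff {k : ℕ} {ω : Ω} :
    IsCompleteRecord X (k + 1) ω ↔ ω ∈ recordEvent (fun m => X (m + 1)) k := by
  constructor
  · exact fun h i hik j => h (i + 1) (by omega) (by omega) j
  · intro h i hi hik j
    obtain ⟨i, rfl⟩ := Nat.exists_eq_add_of_le' hi
    exact h i (by omega) j

theorem terminalRecordIndex_eq_succ_iff {k : ℕ} {ω : Ω} :
    terminalRecordIndex X ω = k + 1 ↔ ω ∈ lastRecordEvent (fun m => X (m + 1)) k := by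
  set A := {m : ℕ | 1 ≤ m ∧ IsCompleteRecord X m ω}
  have hgreatest : terminalRecordIndex X ω = k + 1 ↔ IsGreatest A (k + 1) := by
    refine ⟨fun h => ?_, IsGreatest.csSup_eq⟩
    have hbdd : BddAbove A := by
      by_contra hA
      rw [terminalRecordIndex, csSup_of_not_bddAbove hA, csSup_empty] at h
      exact Nat.zero_ne_add_one k h
    have h1 : 1 ∈ A := ⟨le_rfl, fun i hi hi1 => absurd hi1 (by omega)⟩
    exact h ▸ ⟨Nat.sSup_mem ⟨1, h1⟩ hbdd, fun m hm => le_csSup hbdd hm⟩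
  rw [hgreatest, lastRecordEvent, mem_inter_iff, mem_iInter, ← isCompleteRecord_succ_iff]
  simp_rw [mem_compl_iff, ← isCompleteRecord_succ_iff]
  constructor
  · rintro ⟨⟨-, hk⟩, hub⟩
    exact ⟨hk, fun m hm => by have := hub ⟨by omega, hm⟩; omega⟩
  · rintro ⟨hk, hno⟩
    refine ⟨⟨by omega, hk⟩, fun m ⟨hm1, hm⟩ => ?_⟩
    by_contra! hlt
    obtain ⟨i, rfl⟩ : ∃ i, m = i + k + 1 + 1 := ⟨m - k - 2, by omega⟩
    exact hno i hm

theorem lintegral_terminalRecordIndex [MeasurableSpace Ω] (P : Measure Ω)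
    (hmeas : ∀ m, Measurable (X m)) :
    ∫⁻ ω, (terminalRecordIndex X ω : ℝ≥0∞) ∂P =
      ∑' k, ((k + 1 : ℕ) : ℝ≥0∞) * P (lastRecordEvent (fun m => X (m + 1)) k) := by
  have hG := measurableSet_lastRecordEvent fun m => hmeas (m + 1)
  have hT (ω : Ω) : (terminalRecordIndex X ω : ℝ≥0∞) = ∑' k,
      (lastRecordEvent (fun m => X (m + 1)) k).indicator (fun _ => ((k + 1 : ℕ) : ℝ≥0∞)) ω := by
    rcases h : terminalRecordIndex X ω with _ | k
    · rw [Nat.cast_zero]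
      refine (ENNReal.tsum_eq_zero.2 fun k => indicator_of_notMem ?_ _).symm
      rw [← terminalRecordIndex_eq_succ_iff, h]
      omega
    · rw [tsum_eq_single k fun k' hk' => indicator_of_notMem ?_ _,
        indicator_of_mem (terminalRecordIndex_eq_succ_iff.1 h)]
      rw [← terminalRecordIndex_eq_succ_iff, h]
      omega
  simp_rw [hT]
  rw [lintegral_tsum fun k => (measurable_const.indicator (hG k)).aemeasurable]
  exact tsum_congr fun k => lintegral_indicator_const (hG k) _

theorem lintegral_terminalRecordIndex_eq_tsum [MeasurableSpace Ω] {P : Measure Ω}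
    [IsProbabilityMeasure P] {ν : Fin d → Measure ℝ} [∀ j, IsProbabilityMeasure (ν j)]
    [∀ j, NullSingletonClass (ν j)] (hd : d ≠ 0) (hmeas : ∀ m, Measurable (X m))
    (hindep : iIndepFun (fun m => X (m + 1)) P) (hlaw : ∀ m, P.map (X (m + 1)) = Measure.pi ν) :
    ∫⁻ ω, (terminalRecordIndex X ω : ℝ≥0∞) ∂P =
      ∑' k, ENNReal.ofReal (1 / ((k + 1 : ℕ) : ℝ) ^ (d - 1) *
        P.real (⋂ m, (recordEvent (fun m => X (m + 1)) (m + k + 1))ᶜ)) := by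
  rw [lintegral_terminalRecordIndex P hmeas]
  refine tsum_congr fun k => ?_
  rw [← ofReal_measureReal, ← ENNReal.ofReal_natCast, ← ENNReal.ofReal_mul (by positivity),
    measureReal_lastRecordEvent (fun m => hmeas (m + 1)) hindep hlaw, Fintype.card_fin,
    ← pow_sub_one_mul hd]
  congr 1
  field_simp

end TerminalRecord

/-- If `d ≥ 3`, the expected arrival time of the terminal complete record
is finite; more precisely
`E(T) = ∑_{k≥1} k^{-(d-1)} ∏_{m≥k+1} (1 - m⁻ᵈ) ≤ ∑_{k≥1} k^{-(d-1)} < ∞`. -/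
theorem expectation_terminal_record_index_finite
    {Ω : Type*} [MeasurableSpace Ω] (P : Measure Ω) [IsProbabilityMeasure P]
    (d : ℕ) (hd : 3 ≤ d) (X : ℕ → Ω → Fin d → ℝ)
    (hmeas : ∀ m, Measurable (X m))
    (hindep : iIndepFun (fun m : ℕ => X (m + 1)) P)
    (hident : ∀ m : ℕ, P.map (X (m + 1)) = P.map (X 1))
    (hcomp : iIndepFun (fun (j : Fin d) ω => X 1 ω j) P)
    (hcont : ∀ j : Fin d, Continuous fun t : ℝ => (P {ω | X 1 ω j ≤ t}).toReal) :
    ∫⁻ ω, (terminalRecordIndex X ω : ENNReal) ∂P ≠ ⊤ ∧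
      (∫⁻ ω, (terminalRecordIndex X ω : ENNReal) ∂P).toReal =
        ∑' k : ℕ, (1 / ((k + 1 : ℕ) : ℝ) ^ (d - 1)) *
          ∏' m : ℕ, (1 - 1 / ((m + k + 2 : ℕ) : ℝ) ^ d) ∧
      (∫⁻ ω, (terminalRecordIndex X ω : ENNReal) ∂P).toReal ≤
        ∑' k : ℕ, 1 / ((k + 1 : ℕ) : ℝ) ^ (d - 1) := by
  set ν : Fin d → Measure ℝ := fun j => P.map fun ω => X 1 ω j
  have hcoord (j : Fin d) : Measurable fun ω => X 1 ω j := (measurable_pi_apply j).comp (hmeas 1)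
  have (j : Fin d) : IsProbabilityMeasure (ν j) :=
    Measure.isProbabilityMeasure_map (hcoord j).aemeasurable
  have (j : Fin d) : NullSingletonClass (ν j) :=
    nullSingletonClass_map_of_continuous (hcoord j) (hcont j)
  have hlaw (m : ℕ) : P.map (X (m + 1)) = Measure.pi ν := by
    rw [hident m, ← (iIndepFun_iff_map_fun_eq_pi_map fun j => (hcoord j).aemeasurable).1 hcomp]
  set b := fun k : ℕ => 1 / ((k + 1 : ℕ) : ℝ) ^ (d - 1)
  set N := fun k => P.real (⋂ m, (recordEvent (fun m => X (m + 1)) (m + k + 1))ᶜ)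
  have hb : Summable b := (summable_nat_add_iff 1).2 (Real.summable_one_div_nat_pow.2 (by omega))
  have hbN_nonneg (k : ℕ) : 0 ≤ b k * N k := by positivity
  have hbN_le (k : ℕ) : b k * N k ≤ b k :=
    mul_le_of_le_one_right (by positivity) measureReal_le_one
  have hbN : Summable fun k => b k * N k := hb.of_nonneg_of_le hbN_nonneg hbN_le
  rw [lintegral_terminalRecordIndex_eq_tsum (by omega) hmeas hindep hlaw,
    ← ENNReal.ofReal_tsum_of_nonneg hbN_nonneg hbN,
    ENNReal.toReal_ofReal (tsum_nonneg hbN_nonneg)]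
  refine ⟨ENNReal.ofReal_ne_top, tsum_congr fun k => ?_, hbN.tsum_le_tsum hbN_le hb⟩
  have hN :=
    (hasProd_measureReal_iInter_compl_recordEvent (fun m => hmeas (m + 1)) hindep hlaw k).tprod_eq
  rw [Fintype.card_fin] at hN
  rw [hN]
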